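/- arXiv:math/0308217 — 4 statements merged into one kernel-verified Lean document; each statement's English description precedes it below -/
import Mathlib

section
/- Let h be an irrational real number and m, n ∈ ℤ. The map f_{m·h+n, n} is a translation of ℝ² (i.e., there exists v ∈ ℝ² with f_{m·h+n, n}(x) = x + v for all x) if and only if m = 0 and n = 0. Hence the subgroup generated by f_{h,0} and f_{1,1} contains no translation other than the identity. -/
/-- The affine map `f_{s,t}(x,y) = (x + s·y + s²/2 + t, y + s)` on `ℝ²`. -/
noncomputable def f (s t : ℝ) : ℝ × ℝ → ℝ × ℝ :=
  fun p => (p.1 + s * p.2 + s ^ 2 / 2 + t, p.2 + s)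

/-- The map `f_{s,t}` as a bijection of `ℝ²` (its inverse is `f_{-s,-t}`). -/
noncomputable def fE (s t : ℝ) : Equiv.Perm (ℝ × ℝ) where
  toFun p := (p.1 + s * p.2 + s ^ 2 / 2 + t, p.2 + s)
  invFun p := (p.1 - s * p.2 + s ^ 2 / 2 - t, p.2 - s)
  left_inv p := by
    obtain ⟨x, y⟩ := p
    simp only [Prod.mk.injEq]
    constructor <;> ring
  right_inv p := by
    obtain ⟨x, y⟩ := p
    simp only [Prod.mk.injEq]
    constructor <;> ring

lemma fE_apply (s t : ℝ) (p : ℝ × ℝ) :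
    fE s t p = (p.1 + s * p.2 + s ^ 2 / 2 + t, p.2 + s) := rfl

lemma fE_mul (s t s' t' : ℝ) : fE s t * fE s' t' = fE (s + s') (t + t') := by
  ext p <;> simp [fE_apply, Equiv.Perm.mul_apply] <;> ring

lemma fE_one : fE 0 0 = 1 := by
  ext p <;> simp [fE_apply]

lemma fE_inv (s t : ℝ) : (fE s t)⁻¹ = fE (-s) (-t) := by
  apply inv_eq_of_mul_eq_one_right
  rw [fE_mul]
  simpa using fE_one

theorem stmt4 (h : ℝ) (hh : Irrational h) :
    (∀ m n : ℤ,
      (∃ v : ℝ × ℝ, ∀ x : ℝ × ℝ, f ((m : ℝ) * h + n) (n : ℝ) x = x + v) ↔ (m = 0 ∧ n = 0)) ∧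
    (∀ g ∈ Subgroup.closure {fE h 0, fE 1 1},
      (∃ v : ℝ × ℝ, ∀ x : ℝ × ℝ, g x = x + v) → g = 1) := by
  have key : ∀ m n : ℤ,
      (∃ v : ℝ × ℝ, ∀ x : ℝ × ℝ, f ((m : ℝ) * h + n) (n : ℝ) x = x + v) ↔ (m = 0 ∧ n = 0) := by
    intro m n
    constructor
    · rintro ⟨v, hv⟩
      have h1 := hv (0, 0)
      have h2 := hv (0, 1)
      simp only [f, Prod.ext_iff, Prod.fst_add, Prod.snd_add] at h1 h2
      -- second coordinate of x=(0,1) vs x=(0,0) give s = 0 via first coords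
      have hs : (m : ℝ) * h + n = 0 := by
        have := h2.1
        rw [← h1.1] at this
        linarith [this]
      have hm : m = 0 := by
        by_contra hm0
        apply hh
        refine ⟨(-n : ℚ) / (m : ℚ), ?_⟩
        have hmR : (m : ℝ) ≠ 0 := by exact_mod_cast hm0
        push_cast
        field_simp
        linarith [hs]
      subst hm
      have hn : (n : ℝ) = 0 := by simpa using hs
      exact ⟨rfl, by exact_mod_cast hn⟩
    · rintro ⟨rfl, rfl⟩
      refine ⟨(0, 0), fun x => ?_⟩
      simp [f, Prod.ext_iff]
  refine ⟨key, ?_⟩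
  intro g hg
  have hform : ∃ m n : ℤ, g = fE ((m : ℝ) * h + n) (n : ℝ) := by
    induction hg using Subgroup.closure_induction with
    | mem x hx =>
      rcases hx with rfl | rfl
      · exact ⟨1, 0, by norm_num⟩
      · exact ⟨0, 1, by norm_num⟩
    | one => exact ⟨0, 0, by simpa using fE_one.symm⟩
    | mul x y _ _ hx hy =>
      obtain ⟨m1, n1, rfl⟩ := hx
      obtain ⟨m2, n2, rfl⟩ := hy
      refine ⟨m1 + m2, n1 + n2, ?_⟩
      rw [fE_mul]
      push_cast
      ring_nf
    | inv x _ hx =>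
      obtain ⟨m1, n1, rfl⟩ := hx
      refine ⟨-m1, -n1, ?_⟩
      rw [fE_inv]
      push_cast
      ring_nf
  intro htrans
  obtain ⟨m, n, rfl⟩ := hform
  have : m = 0 ∧ n = 0 := by
    apply (key m n).mp
    obtain ⟨v, hv⟩ := htrans
    exact ⟨v, fun x => hv x⟩
  obtain ⟨rfl, rfl⟩ := this
  simpa using fE_one
end

section
/- Let h be an irrational real number and m, n ∈ ℤ. If f_{m·h+n, n} has a fixed point in ℝ² (i.e., f_{m·h+n, n}(x,y) = (x,y) for some (x,y) ∈ ℝ²), then m = 0 and n = 0. In other words, the subgroup generated by f_{h,0} and f_{1,1} acts freely on ℝ². -/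
theorem stmt5 (h : ℝ) (hh : Irrational h) :
    (∀ m n : ℤ,
      (∃ p : ℝ × ℝ, f ((m : ℝ) * h + n) (n : ℝ) p = p) → m = 0 ∧ n = 0) ∧
    (∀ g ∈ Subgroup.closure {fE h 0, fE 1 1}, (∃ p : ℝ × ℝ, g p = p) → g = 1) := by
  have key : ∀ m n : ℤ,
      (∃ p : ℝ × ℝ, f ((m : ℝ) * h + n) (n : ℝ) p = p) → m = 0 ∧ n = 0 := by
    intro m n ⟨⟨x, y⟩, hp⟩
    simp only [f, Prod.mk.injEq] at hp
    have hs : (m : ℝ) * h + n = 0 := by linarith [hp.2]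
    have hm : m = 0 := by
      by_contra hm0
      have hm' : (m : ℝ) ≠ 0 := Int.cast_ne_zero.mpr hm0
      have : (((-n : ℚ) / m : ℚ) : ℝ) = h := by
        push_cast
        field_simp
        linarith
      exact hh ⟨_, this⟩
    have hn : n = 0 := by
      have : (n : ℝ) = 0 := by rw [hm] at hs; simpa using hs
      exact_mod_cast this
    exact ⟨hm, hn⟩
  refine ⟨key, ?_⟩
  intro g hg hfix
  have hrep : ∃ m n : ℤ, g = fE ((m : ℝ) * h + n) n := by
    clear hfix
    induction hg using Subgroup.closure_induction with
    | mem x hx =>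
      rcases hx with hx | hx
      · exact ⟨1, 0, by rw [hx]; norm_num⟩
      · exact ⟨0, 1, by rw [hx]; norm_num⟩
    | one => exact ⟨0, 0, by norm_num [fE_one]⟩
    | mul a b _ _ ha hb =>
      obtain ⟨m, n, rfl⟩ := ha
      obtain ⟨m', n', rfl⟩ := hb
      exact ⟨m + m', n + n', by rw [fE_mul]; push_cast; ring_nf⟩
    | inv a _ ha =>
      obtain ⟨m, n, rfl⟩ := ha
      exact ⟨-m, -n, by rw [fE_inv]; push_cast; ring_nf⟩
  obtain ⟨m, n, rfl⟩ := hrep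
  have hfix' : ∃ p : ℝ × ℝ, f ((m : ℝ) * h + n) (n : ℝ) p = p := hfix
  obtain ⟨hm, hn⟩ := key m n hfix'
  subst hm; subst hn
  simpa using fE_one
end

section
/- Let h be an irrational real number. The map ℤ² → ℝ² given by (m,n) ↦ f_{m·h+n, n}(0,0) = ((m·h+n)²/2 + n, m·h+n) is injective, and its image (the orbit of the origin under the group generated by f_{h,0} and f_{1,1}) is a closed, discrete subset of ℝ². -/
/-- The orbit map of the origin under the group `{f_{m·h+n,n}}` generated by
`f_{h,0}` and `f_{1,1}`. -/
noncomputable def orbitMap (h : ℝ) : ℤ × ℤ → ℝ × ℝ :=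
  fun mn => f ((mn.1 : ℝ) * h + mn.2) (mn.2 : ℝ) (0, 0)

/-!
The orbit map is the restriction to the lattice `ℤ² ⊆ ℝ²` of the map
`(a, b) ↦ ((a h + b)²/2 + b, a h + b)`, which for `h ≠ 0` is a homeomorphism of `ℝ²`: the
second coordinate recovers `s = a h + b`, then the first recovers `b`, and finally `a = (s - b)/h`.
Since `ℤ²` is closed and discrete in `ℝ²`, so is its image under a homeomorphism.
-/

open Topology

lemma orbitMap_apply (h : ℝ) (m n : ℤ) :
    orbitMap h (m, n) = (((m : ℝ) * h + n) ^ 2 / 2 + n, (m : ℝ) * h + n) := by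
  simp [orbitMap, f]

noncomputable def orbitHomeomorph {h : ℝ} (hh : h ≠ 0) : ℝ × ℝ ≃ₜ ℝ × ℝ where
  toFun p := ((p.1 * h + p.2) ^ 2 / 2 + p.2, p.1 * h + p.2)
  invFun q := ((q.2 - (q.1 - q.2 ^ 2 / 2)) / h, q.1 - q.2 ^ 2 / 2)
  left_inv p := by ext <;> field_simp <;> ring
  right_inv q := by ext <;> field_simp <;> ring
  continuous_toFun := by fun_prop
  continuous_invFun := by fun_prop

lemma orbitMap_eq_orbitHomeomorph_comp {h : ℝ} (hh : h ≠ 0) :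
    orbitMap h = orbitHomeomorph hh ∘ Prod.map ((↑) : ℤ → ℝ) ((↑) : ℤ → ℝ) := by
  ext ⟨m, n⟩ <;> simp [orbitMap_apply, orbitHomeomorph]

lemma isClosedEmbedding_orbitMap {h : ℝ} (hh : h ≠ 0) : IsClosedEmbedding (orbitMap h) := by
  rw [orbitMap_eq_orbitHomeomorph_comp hh]
  exact (orbitHomeomorph hh).isClosedEmbedding.comp
    (Int.isClosedEmbedding_coe_real.prodMap Int.isClosedEmbedding_coe_real)

theorem stmt6 (h : ℝ) (hh : Irrational h) :
    (∀ m n : ℤ,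
      orbitMap h (m, n) = (((m : ℝ) * h + n) ^ 2 / 2 + n, (m : ℝ) * h + n)) ∧
    Function.Injective (orbitMap h) ∧
    IsClosed (Set.range (orbitMap h)) ∧
    DiscreteTopology (Set.range (orbitMap h)) := by
  have hemb := isClosedEmbedding_orbitMap hh.ne_zero
  exact ⟨orbitMap_apply h, hemb.injective, hemb.isClosed_range,
    hemb.toIsEmbedding.toHomeomorph.discreteTopology_iff.mp inferInstance⟩
end

section
/- Every element of the subgroup of the group of bijections of ℝ⁴ generated by h₁, h₂, h₃, h₄, other than the identity, has no fixed point in ℝ⁴: if g lies in this subgroup and g(x) = x for some x ∈ ℝ⁴, then g is the identity map. -/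
set_option linter.unreachableTactic false
set_option linter.unusedTactic false
set_option linter.unnecessarySeqFocus false

/-- `h₁(x) = (x₁+1, x₂, x₃, x₄)` as a bijection of `ℝ⁴`. -/
noncomputable def hE₁ : Equiv.Perm (Fin 4 → ℝ) where
  toFun x := ![x 0 + 1, x 1, x 2, x 3]
  invFun x := ![x 0 - 1, x 1, x 2, x 3]
  left_inv x := by funext i; fin_cases i <;> simp <;> ring
  right_inv x := by funext i; fin_cases i <;> simp <;> ring

/-- `h₂(x) = (x₁+x₂, x₂+1, x₃, −x₃+x₄)` as a bijection of `ℝ⁴`. -/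
noncomputable def hE₂ : Equiv.Perm (Fin 4 → ℝ) where
  toFun x := ![x 0 + x 1, x 1 + 1, x 2, -x 2 + x 3]
  invFun x := ![x 0 - x 1 + 1, x 1 - 1, x 2, x 2 + x 3]
  left_inv x := by funext i; fin_cases i <;> simp <;> ring
  right_inv x := by funext i; fin_cases i <;> simp <;> ring

/-- `h₃(x) = (x₁, x₂, x₃, x₄+1)` as a bijection of `ℝ⁴`. -/
noncomputable def hE₃ : Equiv.Perm (Fin 4 → ℝ) where
  toFun x := ![x 0, x 1, x 2, x 3 + 1]
  invFun x := ![x 0, x 1, x 2, x 3 - 1]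
  left_inv x := by funext i; fin_cases i <;> simp <;> ring
  right_inv x := by funext i; fin_cases i <;> simp <;> ring

/-- `h₄(x) = (x₁+x₂, x₂, x₃+1, −x₃+x₄)` as a bijection of `ℝ⁴`. -/
noncomputable def hE₄ : Equiv.Perm (Fin 4 → ℝ) where
  toFun x := ![x 0 + x 1, x 1, x 2 + 1, -x 2 + x 3]
  invFun x := ![x 0 - x 1, x 1, x 2 - 1, x 2 + x 3 - 1]
  left_inv x := by funext i; fin_cases i <;> simp <;> ring
  right_inv x := by funext i; fin_cases i <;> simp <;> ring

private lemma key_form :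
    ∀ g ∈ Subgroup.closure ({hE₁, hE₂, hE₃, hE₄} : Set (Equiv.Perm (Fin 4 → ℝ))),
      ∃ b c a d : ℤ, ∀ x : Fin 4 → ℝ,
        g x = ![x 0 + ((b : ℝ) + c) * x 1 + a, x 1 + b, x 2 + c,
                x 3 - ((b : ℝ) + c) * x 2 + d] := by
  intro g hg
  induction hg using Subgroup.closure_induction with
  | mem g hg =>
    rcases hg with h | h | h | h
    · exact ⟨0, 0, 1, 0, by subst h; intro x; funext i; fin_cases i <;>
        simp [hE₁] <;> ring⟩
    · exact ⟨1, 0, 0, 0, by subst h; intro x; funext i; fin_cases i <;>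
        simp [hE₂] <;> ring⟩
    · exact ⟨0, 0, 0, 1, by subst h; intro x; funext i; fin_cases i <;>
        simp [hE₃] <;> ring⟩
    · exact ⟨0, 1, 0, 0, by subst h; intro x; funext i; fin_cases i <;>
        simp [hE₄] <;> ring⟩
  | one =>
    exact ⟨0, 0, 0, 0, by intro x; funext i; fin_cases i <;> simp⟩
  | mul g g' _ _ ihg ihg' =>
    obtain ⟨b, c, a, d, hg1⟩ := ihg
    obtain ⟨b', c', a', d', hg2⟩ := ihg'
    refine ⟨b + b', c + c', a' + (b + c) * b' + a, d' - (b + c) * c' + d, ?_⟩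
    intro x
    have : (g * g') x = g (g' x) := rfl
    rw [this, hg2, hg1]
    funext i; fin_cases i <;> simp <;> push_cast <;> ring
  | inv g _ ihg =>
    obtain ⟨b, c, a, d, hg1⟩ := ihg
    refine ⟨-b, -c, (b + c) * b - a, -(b + c) * c - d, ?_⟩
    intro x
    have : (g⁻¹ : Equiv.Perm (Fin 4 → ℝ)) x = g.symm x := rfl
    rw [this, Equiv.symm_apply_eq, hg1]
    funext i; fin_cases i <;> simp <;> push_cast <;> ring

/-- The group generated by `h₁, h₂, h₃, h₄` acts freely on `ℝ⁴`. -/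
theorem stmt11 :
    ∀ g ∈ Subgroup.closure ({hE₁, hE₂, hE₃, hE₄} : Set (Equiv.Perm (Fin 4 → ℝ))),
      (∃ x : Fin 4 → ℝ, g x = x) → g = 1 := by
  intro g hg ⟨x, hx⟩
  obtain ⟨b, c, a, d, hform⟩ := key_form g hg
  have h1 := congrFun (hform x) 1
  have h2 := congrFun (hform x) 2
  rw [hx] at h1 h2
  simp at h1 h2
  subst h1; subst h2
  have h0 := congrFun (hform x) 0
  have h3 := congrFun (hform x) 3
  rw [hx] at h0 h3
  simp at h0 h3
  subst h0; subst h3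
  have : g = Equiv.refl (Fin 4 → ℝ) :=
    Equiv.ext fun y => by rw [hform y]; funext i; fin_cases i <;> simp
  exact this
end
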